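/- arXiv:1807.03389 — 6 statements merged into one kernel-verified Lean document; each statement's English description precedes it below -/
import Mathlib

section
/- Let m > 0, q > 0, and let a, b ∈ ℂ with |a| < 1. Then the integral ∫_ℂ e^{q|az+b|^m - q|z|^m} dA(z) is finite. -/
open MeasureTheory

/-! Choose `‖a‖ < r < 1`. Outside a ball `‖a z + b‖ ≤ r ‖z‖`, so `‖a z + b‖ ^ m ≤ r ^ m ‖z‖ ^ m + C`
everywhere and the integrand is dominated by `e^{qC} e^{-q (1 - r ^ m) ‖z‖ ^ m}`. In polar
coordinates the integral of the latter becomes a convergent Gamma-type integral. -/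

theorem integrable_exp_neg_mul_norm_rpow {E : Type*} [NormedAddCommGroup E] [NormedSpace ℝ E]
    [FiniteDimensional ℝ E] [Nontrivial E] [MeasurableSpace E] [BorelSpace E]
    (μ : Measure E) [μ.IsAddHaarMeasure] {b p : ℝ} (hb : 0 < b) (hp : 0 < p) :
    Integrable (fun x : E => Real.exp (-b * ‖x‖ ^ p)) μ := by
  rw [integrable_fun_norm_addHaar μ (f := fun y => Real.exp (-b * y ^ p))]
  have hdim : (-1 : ℝ) < (Module.finrank ℝ E - 1 : ℕ) :=
    neg_one_lt_zero.trans_le (Nat.cast_nonneg _)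
  refine (integrableOn_rpow_mul_exp_neg_mul_rpow hdim hp hb).congr_fun (fun y _ => ?_)
    measurableSet_Ioi
  simp [Real.rpow_natCast]

lemma mul_add_le_max_mul_div_sub {s r c t : ℝ} (hs : 0 ≤ s) (hsr : s < r) :
    s * t + c ≤ max (r * t) (r * c / (r - s)) := by
  have hrs : 0 < r - s := sub_pos.mpr hsr
  rcases le_or_gt t (c / (r - s)) with ht | ht
  · refine le_max_of_le_right ?_
    rw [le_div_iff₀ hrs]
    rw [le_div_iff₀ hrs] at ht
    nlinarith
  · refine le_max_of_le_left ?_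
    rw [div_lt_iff₀ hrs] at ht
    nlinarith

lemma exists_norm_smul_add_rpow_le {𝕜 E : Type*} [NormedField 𝕜] [SeminormedAddCommGroup E]
    [NormedSpace 𝕜 E] {a : 𝕜} {r : ℝ} (b : E) (har : ‖a‖ < r) {m : ℝ} (hm : 0 ≤ m) :
    ∃ C, ∀ z : E, ‖a • z + b‖ ^ m ≤ r ^ m * ‖z‖ ^ m + C := by
  have hr : 0 < r := (norm_nonneg a).trans_lt har
  set R := r * ‖b‖ / (r - ‖a‖)
  have hR : 0 ≤ R := div_nonneg (by positivity) (sub_pos.mpr har).le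
  refine ⟨R ^ m, fun z => ?_⟩
  have hle : ‖a • z + b‖ ≤ max (r * ‖z‖) R :=
    (norm_add_le_of_le (norm_smul a z).le le_rfl).trans
      (mul_add_le_max_mul_div_sub (norm_nonneg a) har)
  calc ‖a • z + b‖ ^ m ≤ max (r * ‖z‖) R ^ m := Real.rpow_le_rpow (norm_nonneg _) hle hm
    _ = max ((r * ‖z‖) ^ m) (R ^ m) := Real.rpow_max (by positivity) hR hm
    _ ≤ (r * ‖z‖) ^ m + R ^ m := max_le_add_of_nonneg (by positivity) (by positivity)
    _ = r ^ m * ‖z‖ ^ m + R ^ m := by rw [Real.mul_rpow hr.le (norm_nonneg z)]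

theorem integrable_exp_mul_norm_smul_add_rpow_sub {𝕜 E : Type*} [NormedField 𝕜]
    [NormedAddCommGroup E] [NormedSpace 𝕜 E] [NormedSpace ℝ E] [FiniteDimensional ℝ E]
    [Nontrivial E] [MeasurableSpace E] [BorelSpace E] (μ : Measure E) [μ.IsAddHaarMeasure]
    {m q : ℝ} (hm : 0 < m) (hq : 0 < q) {a : 𝕜} (b : E) (ha : ‖a‖ < 1) :
    Integrable (fun z : E => Real.exp (q * ‖a • z + b‖ ^ m - q * ‖z‖ ^ m)) μ := by
  obtain ⟨r, har, hr1⟩ := exists_between ha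
  obtain ⟨C, hC⟩ := exists_norm_smul_add_rpow_le b har hm.le
  have hε : 0 < q * (1 - r ^ m) :=
    mul_pos hq (sub_pos.mpr (Real.rpow_lt_one ((norm_nonneg a).trans har.le) hr1 hm))
  have hmeas : Continuous fun z : E => Real.exp (q * ‖a • z + b‖ ^ m - q * ‖z‖ ^ m) := by
    fun_prop (disch := exact hm.le)
  refine ((integrable_exp_neg_mul_norm_rpow μ hε hm).const_mul (Real.exp (q * C))).mono'
    hmeas.aestronglyMeasurable (.of_forall fun z => ?_)
  rw [Real.norm_of_nonneg (Real.exp_pos _).le, ← Real.exp_add, Real.exp_le_exp]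
  have := mul_le_mul_of_nonneg_left (hC z) hq.le
  linarith

theorem integrable_exp_weight_difference (m q : ℝ) (hm : 0 < m) (hq : 0 < q)
    (a b : ℂ) (ha : ‖a‖ < 1) :
    Integrable
      (fun z : ℂ => Real.exp (q * ‖a * z + b‖ ^ m - q * ‖z‖ ^ m))
      volume := by
  simpa only [smul_eq_mul] using integrable_exp_mul_norm_smul_add_rpow_sub volume hm hq b ha
end

section
/- Let m > 0 and let Φ(z) = az + b with a, b ∈ ℂ, |a| < 1. Suppose (f_n) is a sequence of entire functions such that sup_n sup_{z ∈ ℂ} |f_n(z)| e^{-|z|^m} < ∞ and f_n → 0 uniformly on every compact subset of ℂ. Then sup_{z ∈ ℂ} |f_n(Φ(z))| e^{-|z|^m} → 0 as n → ∞. -/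
/-!
Write `w = a z + b`. The growth bound gives `|f_n(w)| e^{-|z|^m} ≤ M e^{|w|^m - |z|^m}`, and since
`|w| ≤ |a| |z| + |b|` with `|a| < 1`, the exponent tends to `-∞` as `|z| → ∞`; so outside a large
disc `|z| ≤ R` the weighted values are uniformly small. Inside it, `w` stays in a fixed compact
disc, on which `f_n → 0` uniformly, while the weight is at most `1`.
-/

open Filter Topology Real

lemma tendsto_rpow_affine_sub_rpow_atBot {m A B : ℝ} (hm : 0 < m) (hA₀ : 0 ≤ A) (hA₁ : A < 1)
    (hB : 0 ≤ B) : Tendsto (fun t : ℝ => (A * t + B) ^ m - t ^ m) atTop atBot := by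
  obtain ⟨c, hAc, hc₁⟩ := exists_between hA₁
  have hc₀ : 0 ≤ c := hA₀.trans hAc.le
  have hcm : c ^ m - 1 < 0 := sub_neg.mpr (rpow_lt_one hc₀ hc₁ hm)
  refine tendsto_atBot_mono' atTop ?_ ((tendsto_rpow_atTop hm).const_mul_atTop_of_neg hcm)
  filter_upwards [eventually_ge_atTop (B / (c - A)), eventually_ge_atTop 0] with t hBt ht
  have hlin : A * t + B ≤ c * t := by
    have := (div_le_iff₀ (sub_pos.mpr hAc)).mp hBt
    linarith
  calc (A * t + B) ^ m - t ^ m ≤ (c * t) ^ m - t ^ m := by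
        gcongr
    _ = (c ^ m - 1) * t ^ m := by rw [mul_rpow hc₀ ht]; ring

lemma norm_mul_exp_neg_le_of_weighted_bound {E F : Type*} [SeminormedAddCommGroup E]
    [SeminormedAddCommGroup F] {g : E → F} {m M r : ℝ} (hm : 0 ≤ m)
    (hg : ∀ w, ‖g w‖ * exp (-(‖w‖ ^ m)) ≤ M) {w : E} (hw : ‖w‖ ≤ r) (s : ℝ) :
    ‖g w‖ * exp (-s) ≤ M * exp (r ^ m - s) := by
  have hM : 0 ≤ M := (by positivity : 0 ≤ ‖g w‖ * exp (-(‖w‖ ^ m))).trans (hg w)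
  calc ‖g w‖ * exp (-s) = ‖g w‖ * exp (-(‖w‖ ^ m)) * exp (‖w‖ ^ m - s) := by
        rw [mul_assoc, ← exp_add]; ring_nf
    _ ≤ M * exp (‖w‖ ^ m - s) := by gcongr; exact hg w
    _ ≤ M * exp (r ^ m - s) := by gcongr

theorem compact_composition_affine_growth_general (m : ℝ) (hm : 0 < m) (a b : ℂ)
    (ha : ‖a‖ < 1) (f : ℕ → ℂ → ℂ)
    (hbd : ∃ M : ℝ, ∀ n (z : ℂ), ‖f n z‖ * Real.exp (-(‖z‖ ^ m)) ≤ M)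
    (hconv : TendstoLocallyUniformly f 0 Filter.atTop) :
    ∀ ε > (0 : ℝ), ∃ N, ∀ n ≥ N, ∀ z : ℂ,
      ‖f n (a * z + b)‖ * Real.exp (-(‖z‖ ^ m)) ≤ ε := by
  obtain ⟨M, hM⟩ := hbd
  intro ε hε
  have hnorm (z : ℂ) : ‖a * z + b‖ ≤ ‖a‖ * ‖z‖ + ‖b‖ := (norm_add_le _ _).trans_eq (by rw [norm_mul])
  have htail : Tendsto (fun t => M * exp ((‖a‖ * t + ‖b‖) ^ m - t ^ m)) atTop (𝓝 0) := by
    simpa using (tendsto_exp_atBot.comp <| tendsto_rpow_affine_sub_rpow_atBot hm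
      (norm_nonneg a) ha (norm_nonneg b)).const_mul M
  obtain ⟨R, hR⟩ := eventually_atTop.mp (htail.eventually (ge_mem_nhds hε))
  obtain ⟨N, hN⟩ := eventually_atTop.mp <| Metric.tendstoUniformlyOn_iff.mp
    (tendstoLocallyUniformly_iff_forall_isCompact.mp hconv _
      (isCompact_closedBall (0 : ℂ) (‖a‖ * R + ‖b‖))) ε hε
  refine ⟨N, fun n hn z => ?_⟩
  rcases le_total ‖z‖ R with hzR | hzR
  · have hw : a * z + b ∈ Metric.closedBall (0 : ℂ) (‖a‖ * R + ‖b‖) := by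
      rw [mem_closedBall_zero_iff]
      exact (hnorm z).trans (by gcongr)
    have hsmall : ‖f n (a * z + b)‖ < ε := by simpa using hN n hn _ hw
    have hweight : exp (-(‖z‖ ^ m)) ≤ 1 := exp_le_one_iff.mpr (by simp; positivity)
    exact (mul_le_of_le_one_right (norm_nonneg _) hweight).trans hsmall.le
  · exact (norm_mul_exp_neg_le_of_weighted_bound hm.le (hM n) (hnorm z) _).trans (hR _ hzR)

theorem compact_composition_affine_growth (m : ℝ) (hm : 0 < m) (a b : ℂ)
    (ha : ‖a‖ < 1) (f : ℕ → ℂ → ℂ) (hf : ∀ n, Differentiable ℂ (f n))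
    (hbd : ∃ M : ℝ, ∀ n (z : ℂ), ‖f n z‖ * Real.exp (-(‖z‖ ^ m)) ≤ M)
    (hconv : TendstoLocallyUniformly f 0 Filter.atTop) :
    ∀ ε > (0 : ℝ), ∃ N, ∀ n ≥ N, ∀ z : ℂ,
      ‖f n (a * z + b)‖ * Real.exp (-(‖z‖ ^ m)) ≤ ε :=
  compact_composition_affine_growth_general m hm a b ha f hbd hconv
end

section
/- Let m > 0 and let Φ be an entire function such that the composition operator C_Φ f = f ∘ Φ maps F_{(m,∞)} boundedly into itself and is compact (that is, for every bounded sequence (f_n) in F_{(m,∞)} converging to 0 uniformly on compact sets, ‖f_n ∘ Φ‖_{(m,∞)} → 0). Then Φ(z) = az + b for some a, b ∈ ℂ with |a| < 1. -/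
/-!
The monomials `z ^ n / P n`, where `P n = (n/m)^(n/m) e^(-n/m)` is the maximum of `r ^ n e^(-r ^ m)`
over `r ≥ 0` (attained at `r ^ m = n/m`), form a bounded sequence in `F_(m,∞)` tending to `0`
locally uniformly. Compactness yields `N` with `‖Φ z‖ ^ n e^(-‖z‖ ^ m) ≤ P n / 2` for all `n ≥ N`.
Taking `n ≈ m ‖z‖ ^ m` gives `‖Φ z‖ ^ m ≤ ‖z‖ ^ m + O(1)`, so `Φ` grows at most linearly and is
affine by Liouville's theorem applied to `(Φ z - Φ 0) / z`. If `Φ z = a z + b` with `‖a‖ ≥ 1`, one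
of `±r` with `r ^ m = n/m` has `‖Φ (±r)‖ ≥ r`, and there the weighted norm of `z ^ n / P n` is `≥ 1`.
-/

open Filter Topology

noncomputable def monomialPeak (m : ℝ) (n : ℕ) : ℝ :=
  ((n : ℝ) / m) ^ ((n : ℝ) / m) * Real.exp (-((n : ℝ) / m))

theorem Real.rpow_mul_exp_neg_le {s t : ℝ} (hs : 0 ≤ s) (ht : 0 ≤ t) :
    t ^ s * Real.exp (-t) ≤ s ^ s * Real.exp (-s) := by
  rcases hs.eq_or_lt with rfl | hs
  · simpa using ht
  rcases ht.eq_or_lt with rfl | ht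
  · rw [Real.zero_rpow hs.ne', zero_mul]
    positivity
  have hlog := mul_le_mul_of_nonneg_left (Real.log_le_sub_one_of_pos (div_pos ht hs)) hs.le
  rw [Real.log_div ht.ne' hs.ne', mul_sub, mul_sub, mul_div_cancel₀ _ hs.ne'] at hlog
  rw [Real.rpow_def_of_pos ht, Real.rpow_def_of_pos hs, ← Real.exp_add, ← Real.exp_add,
    Real.exp_le_exp]
  linarith

theorem pow_eq_rpow_rpow_div {m ρ : ℝ} (hm : m ≠ 0) (hρ : 0 ≤ ρ) (n : ℕ) :
    ρ ^ n = (ρ ^ m) ^ ((n : ℝ) / m) := by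
  rw [← Real.rpow_mul hρ, mul_div_cancel₀ _ hm, Real.rpow_natCast]

section monomialPeak

variable {m : ℝ}

theorem pow_mul_exp_neg_rpow_le_monomialPeak (hm : 0 < m) (n : ℕ) {r : ℝ} (hr : 0 ≤ r) :
    r ^ n * Real.exp (-(r ^ m)) ≤ monomialPeak m n := by
  rw [pow_eq_rpow_rpow_div hm.ne' hr]
  exact Real.rpow_mul_exp_neg_le (by positivity) (Real.rpow_nonneg hr m)

theorem monomialPeak_pos (hm : 0 < m) (n : ℕ) : 0 < monomialPeak m n :=
  calc 0 < (1 : ℝ) ^ n * Real.exp (-((1 : ℝ) ^ m)) := by positivity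
    _ ≤ monomialPeak m n := pow_mul_exp_neg_rpow_le_monomialPeak hm n zero_le_one

theorem monomialPeak_eq_pow_mul_exp_neg_rpow (hm : 0 < m) (n : ℕ) :
    monomialPeak m n =
      (((n : ℝ) / m) ^ m⁻¹) ^ n * Real.exp (-((((n : ℝ) / m) ^ m⁻¹) ^ m)) := by
  have hs : 0 ≤ (n : ℝ) / m := by positivity
  rw [pow_eq_rpow_rpow_div hm.ne' (Real.rpow_nonneg hs _), Real.rpow_inv_rpow hs hm.ne',
    monomialPeak]

theorem rpow_le_of_pow_mul_exp_neg_le_monomialPeak (hm : 0 < m) {n : ℕ} (hn : n ≠ 0) {ρ t : ℝ}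
    (hρ : 0 ≤ ρ) (ht : t ≤ n / m) (h : ρ ^ n * Real.exp (-t) ≤ monomialPeak m n) :
    ρ ^ m ≤ n / m := by
  set s : ℝ := n / m
  have hs : 0 < s := by positivity
  have hpow : (ρ ^ m) ^ s ≤ s ^ s :=
    calc (ρ ^ m) ^ s = ρ ^ n * Real.exp (-t) * Real.exp t := by
          rw [mul_assoc, ← Real.exp_add, neg_add_cancel, Real.exp_zero, mul_one,
            pow_eq_rpow_rpow_div hm.ne' hρ]
      _ ≤ monomialPeak m n * Real.exp t := by gcongr
      _ = s ^ s * Real.exp (t - s) := by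
          rw [monomialPeak, mul_assoc, ← Real.exp_add, neg_add_eq_sub]
      _ ≤ s ^ s := mul_le_of_le_one_right (by positivity) (Real.exp_le_one_iff.2 (by linarith))
  exact (Real.rpow_le_rpow_iff (Real.rpow_nonneg hρ m) hs.le hs).1 hpow

theorem rpow_le_add_of_forall_pow_mul_exp_neg_le_monomialPeak (hm : 0 < m) {N : ℕ} {ρ t : ℝ} (hρ : 0 ≤ ρ)
    (ht : 0 ≤ t) (h : ∀ n ≥ N, ρ ^ n * Real.exp (-t) ≤ monomialPeak m n) :
    ρ ^ m ≤ t + (N + 2) / m := by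
  set n := N + 1 + ⌈m * t⌉₊
  have hceil : m * t ≤ ⌈m * t⌉₊ ∧ (⌈m * t⌉₊ : ℝ) < m * t + 1 :=
    ⟨Nat.le_ceil _, Nat.ceil_lt_add_one (by positivity)⟩
  have hn : (n : ℝ) = N + 1 + ⌈m * t⌉₊ := by push_cast [n]; ring
  have htn : t ≤ n / m := by
    rw [le_div_iff₀ hm, hn]
    nlinarith [Nat.cast_nonneg (α := ℝ) N]
  calc ρ ^ m ≤ n / m :=
        rpow_le_of_pow_mul_exp_neg_le_monomialPeak hm (by omega) hρ htn (h n (by omega))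
    _ ≤ t + (N + 2) / m := by
        rw [div_le_iff₀ hm, add_mul, div_mul_cancel₀ _ hm.ne', hn]
        linarith

end monomialPeak

theorem le_two_rpow_inv_mul_of_rpow_le_rpow_add {m ρ x D : ℝ} (hm : 0 < m) (hρ : 0 ≤ ρ)
    (hx : 0 ≤ x) (hD : 0 ≤ D) (h : ρ ^ m ≤ x ^ m + D) :
    ρ ≤ 2 ^ m⁻¹ * x + 2 ^ m⁻¹ * D ^ m⁻¹ := by
  set δ := D ^ m⁻¹
  have hδ : 0 ≤ δ := Real.rpow_nonneg hD _
  have hsum : ρ ^ m ≤ (2 ^ m⁻¹ * (x + δ)) ^ m :=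
    calc ρ ^ m ≤ x ^ m + δ ^ m := by rwa [Real.rpow_inv_rpow hD hm.ne']
      _ ≤ (x + δ) ^ m + (x + δ) ^ m := by gcongr <;> linarith
      _ = (2 ^ m⁻¹ * (x + δ)) ^ m := by
          rw [Real.mul_rpow (by positivity) (by positivity),
            Real.rpow_inv_rpow zero_le_two hm.ne', two_mul]
  rw [← mul_add]
  exact (Real.rpow_le_rpow_iff hρ (by positivity) hm).1 hsum

theorem exists_norm_le_mul_add_of_forall_pow_mul_exp_neg_le_monomialPeak {E F : Type*}
    [SeminormedAddCommGroup E] [SeminormedAddCommGroup F] {m : ℝ} (hm : 0 < m) {Φ : E → F}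
    {N : ℕ} (h : ∀ n ≥ N, ∀ z, ‖Φ z‖ ^ n * Real.exp (-(‖z‖ ^ m)) ≤ monomialPeak m n) :
    ∃ A B : ℝ, ∀ z, ‖Φ z‖ ≤ A * ‖z‖ + B :=
  ⟨_, _, fun z => le_two_rpow_inv_mul_of_rpow_le_rpow_add hm (norm_nonneg _) (norm_nonneg z)
    (by positivity) (rpow_le_add_of_forall_pow_mul_exp_neg_le_monomialPeak hm (norm_nonneg _)
      (by positivity) fun n hn => h n hn z)⟩

theorem tendstoLocallyUniformly_mul_pow_zero {𝕜 : Type*} [NormedField 𝕜] {c : ℕ → 𝕜}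
    (hc : ∀ r : ℝ, 0 < r → ∃ C, ∀ n, ‖c n‖ * r ^ n ≤ C) :
    TendstoLocallyUniformly (fun n z => c n * z ^ n) 0 atTop := by
  rw [Metric.tendstoLocallyUniformly_iff]
  intro ε hε x
  set R := ‖x‖ + 1
  have hR : 0 < R := by positivity
  obtain ⟨C, hC⟩ := hc (2 * R) (by positivity)
  have hgeom : Tendsto (fun n : ℕ => C * (1 / 2 : ℝ) ^ n) atTop (𝓝 0) := by
    simpa using (tendsto_pow_atTop_nhds_zero_of_lt_one (by norm_num) one_half_lt_one).const_mul C
  refine ⟨Metric.ball 0 R, Metric.isOpen_ball.mem_nhds (by simp [R]), ?_⟩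
  filter_upwards [hgeom.eventually (gt_mem_nhds hε)] with n hn y hy
  rw [Pi.zero_apply, dist_zero_left, norm_mul, norm_pow]
  have hy : ‖y‖ ≤ R := by simpa using (Metric.mem_ball.1 hy).le
  calc ‖c n‖ * ‖y‖ ^ n ≤ ‖c n‖ * (2 * R) ^ n * (1 / 2) ^ n := by
        rw [mul_assoc, ← mul_pow, mul_comm (2 : ℝ), mul_assoc, mul_one_div_cancel two_ne_zero,
          mul_one]
        gcongr
    _ ≤ C * (1 / 2) ^ n := by gcongr; exact hC n
    _ < ε := hn

theorem Differentiable.exists_eq_smul_add_of_norm_le {E : Type*} [NormedAddCommGroup E]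
    [NormedSpace ℂ E] [CompleteSpace E] {f : ℂ → E} (hf : Differentiable ℂ f) {A B : ℝ}
    (hAB : ∀ z, ‖f z‖ ≤ A * ‖z‖ + B) : ∃ a b : E, ∀ z, f z = z • a + b := by
  set g := dslope f 0
  have hg : Differentiable ℂ g := by
    rw [← differentiableOn_univ] at hf ⊢
    exact (Complex.differentiableOn_dslope univ_mem).2 hf
  obtain ⟨C, hC⟩ := (isCompact_closedBall (0 : ℂ) 1).exists_bound_of_continuousOn
    hg.continuous.continuousOn
  have hg_bdd : ∀ z, ‖g z‖ ≤ max C (|A| + |B| + ‖f 0‖) := by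
    intro z
    rcases le_or_gt ‖z‖ 1 with hz | hz
    · exact (hC z (by simpa using hz)).trans (le_max_left _ _)
    refine le_max_of_le_right ?_
    have hz0 : 0 < ‖z‖ := one_pos.trans hz
    have hslope : ‖z‖ * ‖g z‖ = ‖f z - f 0‖ := by
      have := sub_smul_dslope f 0 z
      rw [sub_zero] at this
      rw [← norm_smul, this]
    rw [← mul_le_mul_iff_right₀ hz0, hslope]
    calc ‖f z - f 0‖ ≤ A * ‖z‖ + B + ‖f 0‖ := (norm_sub_le _ _).trans (by gcongr; exact hAB z)
      _ ≤ ‖z‖ * (|A| + |B| + ‖f 0‖) := by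
          nlinarith [le_abs_self A, le_abs_self B, norm_nonneg (f 0), abs_nonneg B]
  have hg_const : ∀ z, g z = g 0 := fun z =>
    hg.apply_eq_apply_of_bounded (isBounded_iff_forall_norm_le.2 ⟨_, by
      rintro _ ⟨w, rfl⟩; exact hg_bdd w⟩) z 0
  refine ⟨g 0, f 0, fun z => ?_⟩
  rw [← hg_const z, ← sub_eq_iff_eq_add, ← sub_smul_dslope, sub_zero]

theorem Complex.exists_norm_eq_and_mul_le_norm_mul_add (a b : ℂ) {r : ℝ} (hr : 0 ≤ r) :
    ∃ z : ℂ, ‖z‖ = r ∧ ‖a‖ * r ≤ ‖a * z + b‖ := by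
  have htwo : 2 * (‖a‖ * r) ≤ ‖a * r + b‖ + ‖a * (-r : ℂ) + b‖ :=
    calc 2 * (‖a‖ * r) = ‖(a * r + b) - (a * (-r : ℂ) + b)‖ := by
          rw [show (a * r + b) - (a * (-r : ℂ) + b) = 2 * a * r by ring, norm_mul, norm_mul,
            Complex.norm_real, Real.norm_of_nonneg hr, Complex.norm_two, mul_assoc]
      _ ≤ _ := norm_sub_le _ _
  rcases le_total ‖a * (-r : ℂ) + b‖ ‖a * r + b‖ with h | h
  · exact ⟨r, by simp [abs_of_nonneg hr], by linarith⟩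
  · exact ⟨-r, by simp [abs_of_nonneg hr], by linarith⟩

theorem norm_lt_one_of_forall_pow_mul_exp_neg_lt_monomialPeak {m : ℝ} (hm : 0 < m) {a b : ℂ}
    {n : ℕ} (h : ∀ z : ℂ, ‖a * z + b‖ ^ n * Real.exp (-(‖z‖ ^ m)) < monomialPeak m n) :
    ‖a‖ < 1 := by
  by_contra! ha
  set r := ((n : ℝ) / m) ^ m⁻¹
  have hr : 0 ≤ r := by positivity
  obtain ⟨z, hz, hle⟩ := Complex.exists_norm_eq_and_mul_le_norm_mul_add a b hr
  have hrz : r ≤ ‖a * z + b‖ := le_trans (le_mul_of_one_le_left hr ha) hle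
  refine (h z).not_ge ?_
  rw [monomialPeak_eq_pow_mul_exp_neg_rpow hm, hz]
  gcongr

theorem affine_of_compact_composition_growth_general (m : ℝ) (hm : 0 < m)
    (Φ : ℂ → ℂ) (hΦ : Differentiable ℂ Φ)
    (hcpt : ∀ f : ℕ → ℂ → ℂ, (∀ n, Differentiable ℂ (f n)) →
      (∃ M : ℝ, ∀ n (z : ℂ), ‖f n z‖ * Real.exp (-(‖z‖ ^ m)) ≤ M) →
      TendstoLocallyUniformly f 0 Filter.atTop →
      ∀ ε > (0 : ℝ), ∃ N, ∀ n ≥ N, ∀ z : ℂ,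
        ‖f n (Φ z)‖ * Real.exp (-(‖z‖ ^ m)) ≤ ε) :
    ∃ a b : ℂ, ‖a‖ < 1 ∧ ∀ z : ℂ, Φ z = a * z + b := by
  set f : ℕ → ℂ → ℂ := fun n z => ((monomialPeak m n)⁻¹ : ℝ) * z ^ n
  have hf_norm : ∀ n w, ‖f n w‖ = ‖w‖ ^ n / monomialPeak m n := fun n w => by
    simp [f, abs_of_pos (monomialPeak_pos hm n), div_eq_inv_mul]
  have hf_bdd : ∀ n z, ‖f n z‖ * Real.exp (-(‖z‖ ^ m)) ≤ 1 := fun n z => by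
    rw [hf_norm, div_mul_eq_mul_div, div_le_one (monomialPeak_pos hm n)]
    exact pow_mul_exp_neg_rpow_le_monomialPeak hm n (norm_nonneg z)
  have hf_zero : TendstoLocallyUniformly f 0 atTop :=
    tendstoLocallyUniformly_mul_pow_zero fun r hr => ⟨Real.exp (r ^ m), fun n => by
      have hpeak := pow_mul_exp_neg_rpow_le_monomialPeak hm n hr.le
      rw [Real.exp_neg, ← div_eq_mul_inv, div_le_iff₀ (Real.exp_pos _)] at hpeak
      rwa [Complex.norm_real, Real.norm_of_nonneg (inv_nonneg.2 (monomialPeak_pos hm n).le),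
        inv_mul_le_iff₀ (monomialPeak_pos hm n)]⟩
  obtain ⟨N, hN⟩ := hcpt f (fun n => by fun_prop) ⟨1, hf_bdd⟩ hf_zero (1 / 2) one_half_pos
  have hΦN : ∀ n ≥ N, ∀ z, ‖Φ z‖ ^ n * Real.exp (-(‖z‖ ^ m)) < monomialPeak m n := by
    intro n hn z
    have := hN n hn z
    rw [hf_norm, div_mul_eq_mul_div, div_le_iff₀ (monomialPeak_pos hm n)] at this
    linarith [monomialPeak_pos hm n]
  obtain ⟨A, B, hAB⟩ := exists_norm_le_mul_add_of_forall_pow_mul_exp_neg_le_monomialPeak hm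
    fun n hn z => (hΦN n hn z).le
  obtain ⟨a, b, hab⟩ := hΦ.exists_eq_smul_add_of_norm_le hAB
  simp only [smul_eq_mul, mul_comm _ a] at hab
  exact ⟨a, b, norm_lt_one_of_forall_pow_mul_exp_neg_lt_monomialPeak hm fun z => by
    simpa [hab] using hΦN N le_rfl z, hab⟩

theorem affine_of_compact_composition_growth (m : ℝ) (hm : 0 < m)
    (Φ : ℂ → ℂ) (hΦ : Differentiable ℂ Φ)
    (hbdd : ∀ f : ℂ → ℂ, Differentiable ℂ f →
      (∃ M : ℝ, ∀ z : ℂ, ‖f z‖ * Real.exp (-(‖z‖ ^ m)) ≤ M) →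
      ∃ M : ℝ, ∀ z : ℂ, ‖f (Φ z)‖ * Real.exp (-(‖z‖ ^ m)) ≤ M)
    (hcpt : ∀ f : ℕ → ℂ → ℂ, (∀ n, Differentiable ℂ (f n)) →
      (∃ M : ℝ, ∀ n (z : ℂ), ‖f n z‖ * Real.exp (-(‖z‖ ^ m)) ≤ M) →
      TendstoLocallyUniformly f 0 Filter.atTop →
      ∀ ε > (0 : ℝ), ∃ N, ∀ n ≥ N, ∀ z : ℂ,
        ‖f n (Φ z)‖ * Real.exp (-(‖z‖ ^ m)) ≤ ε) :
    ∃ a b : ℂ, ‖a‖ < 1 ∧ ∀ z : ℂ, Φ z = a * z + b :=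
  affine_of_compact_composition_growth_general m hm Φ hΦ hcpt
end

section
/- Let 0 < p < ∞ and m > 0 with m < 1 - 2/p (in particular p > 2). Suppose (f_n) is a sequence of entire functions with sup_n sup_{z} |f_n(z)| e^{-|z|^m} ≤ C < ∞, sup_z |f_n'(z)| e^{-|z|^m} (1+|z|)^{-(m-1)} ≤ C, and f_n → 0 uniformly on compact subsets of ℂ. Then ∫_ℂ |f_n'(z)|^p e^{-p|z|^m} dA(z) → 0 as n → ∞. -/
open MeasureTheory ENNReal Filter Topology

/-!
Since `m < 1 - 2/p`, the derivative bound gives `|f_n'(z)|^p e^{-p|z|^m} ≤ C^p (1+|z|)^{-(1-m)p}`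
with `(1-m)p > 2 = dim_ℝ ℂ`, an integrable majorant. Locally uniform convergence of the holomorphic
`f_n` to `0` forces `f_n' → 0` pointwise (Weierstrass), and dominated convergence concludes.
-/

theorem TendstoLocallyUniformly.tendsto_deriv {ι E : Type*} [NormedAddCommGroup E]
    [NormedSpace ℂ E] [CompleteSpace E] {l : Filter ι} {F : ι → ℂ → E} {g : ℂ → E}
    (h : TendstoLocallyUniformly F g l) (hF : ∀ i, Differentiable ℂ (F i)) (z : ℂ) :
    Tendsto (fun i => deriv (F i) z) l (𝓝 (deriv g z)) := by
  rw [← tendstoLocallyUniformlyOn_univ] at h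
  exact (h.deriv (Eventually.of_forall fun i => (hF i).differentiableOn) isOpen_univ).tendsto_at
    (Set.mem_univ z)

theorem Real.rpow_le_mul_rpow_of_mul_rpow_neg_le {a t s C p : ℝ} (ha : 0 ≤ a) (ht : 0 < t)
    (hp : 0 ≤ p) (h : a * t ^ (-s) ≤ C) : a ^ p ≤ C ^ p * t ^ (s * p) := by
  have hts : 0 < t ^ s := Real.rpow_pos_of_pos ht s
  have hC : 0 ≤ C := (mul_nonneg ha (Real.rpow_nonneg ht.le _)).trans h
  have hat : a ≤ C * t ^ s := by
    rwa [Real.rpow_neg ht.le, ← div_eq_mul_inv, div_le_iff₀ hts] at h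
  calc a ^ p ≤ (C * t ^ s) ^ p := Real.rpow_le_rpow ha hat hp
    _ = C ^ p * t ^ (s * p) := by rw [Real.mul_rpow hC hts.le, Real.rpow_mul ht.le]

theorem Real.mul_exp_neg_rpow {a : ℝ} (ha : 0 ≤ a) (e p : ℝ) :
    (a * Real.exp (-e)) ^ p = a ^ p * Real.exp (-(p * e)) := by
  rw [Real.mul_rpow ha (Real.exp_pos _).le, ← Real.exp_mul, neg_mul, mul_comm e]

theorem MeasureTheory.tendsto_lintegral_ofReal_zero_of_dominated {α : Type*} [MeasurableSpace α]
    {μ : Measure α} {F : ℕ → α → ℝ} {g : α → ℝ} (hF : ∀ n, Measurable (F n))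
    (hg : Integrable g μ) (hbound : ∀ n x, F n x ≤ g x)
    (hlim : ∀ x, Tendsto (fun n => F n x) atTop (𝓝 0)) :
    Tendsto (fun n => ∫⁻ x, ENNReal.ofReal (F n x) ∂μ) atTop (𝓝 0) := by
  simpa using tendsto_lintegral_of_dominated_convergence (fun x => ENNReal.ofReal (g x))
    (fun n => (hF n).ennreal_ofReal)
    (fun n => ae_of_all _ fun x => ENNReal.ofReal_le_ofReal (hbound n x))
    hg.lintegral_lt_top.ne (ae_of_all _ fun x => ENNReal.tendsto_ofReal (hlim x))

theorem compact_differential_growth_to_fock_general (m p : ℝ) (hp : 0 < p)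
    (hmp : m < 1 - 2 / p) (C : ℝ) (f : ℕ → ℂ → ℂ)
    (hf : ∀ n, Differentiable ℂ (f n))
    (hbd' : ∀ n (z : ℂ), ‖deriv (f n) z‖ * Real.exp (-(‖z‖ ^ m)) *
      (1 + ‖z‖) ^ (-(m - 1)) ≤ C)
    (hconv : TendstoLocallyUniformly f 0 atTop) :
    Tendsto (fun n => ∫⁻ z : ℂ,
        ENNReal.ofReal (‖deriv (f n) z‖ ^ p *
          Real.exp (-(p * ‖z‖ ^ m))))
      atTop (nhds 0) := by
  have hdecay : (Module.finrank ℝ ℂ : ℝ) < (1 - m) * p := by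
    rw [Complex.finrank_real_complex, Nat.cast_ofNat, ← div_lt_iff₀ hp]
    linarith
  have hdom : ∀ n (z : ℂ), ‖deriv (f n) z‖ ^ p * Real.exp (-(p * ‖z‖ ^ m)) ≤
      C ^ p * (1 + ‖z‖) ^ (-((1 - m) * p)) := fun n z => by
    have h := Real.rpow_le_mul_rpow_of_mul_rpow_neg_le (by positivity) (by positivity) hp.le
      (hbd' n z)
    rwa [Real.mul_exp_neg_rpow (norm_nonneg _), show (m - 1) * p = -((1 - m) * p) by ring] at h
  have hlim : ∀ z : ℂ, Tendsto (fun n => ‖deriv (f n) z‖ ^ p * Real.exp (-(p * ‖z‖ ^ m)))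
      atTop (𝓝 0) := fun z => by
    have h := ((hconv.tendsto_deriv hf z).norm.rpow_const (Or.inr hp.le)).mul_const
      (Real.exp (-(p * ‖z‖ ^ m)))
    simpa [Real.zero_rpow hp.ne'] using h
  exact tendsto_lintegral_ofReal_zero_of_dominated
    (fun n => ((measurable_deriv (f n)).norm.pow_const p).mul (by fun_prop))
    ((integrable_one_add_norm hdecay).const_mul _) hdom hlim

theorem compact_differential_growth_to_fock (m p : ℝ) (hp : 0 < p) (hm : 0 < m)
    (hmp : m < 1 - 2 / p) (C : ℝ) (f : ℕ → ℂ → ℂ)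
    (hf : ∀ n, Differentiable ℂ (f n))
    (hbd : ∀ n (z : ℂ), ‖f n z‖ * Real.exp (-(‖z‖ ^ m)) ≤ C)
    (hbd' : ∀ n (z : ℂ), ‖deriv (f n) z‖ * Real.exp (-(‖z‖ ^ m)) *
      (1 + ‖z‖) ^ (-(m - 1)) ≤ C)
    (hconv : TendstoLocallyUniformly f 0 atTop) :
    Tendsto (fun n => ∫⁻ z : ℂ,
        ENNReal.ofReal (‖deriv (f n) z‖ ^ p *
          Real.exp (-(p * ‖z‖ ^ m))))
      atTop (nhds 0) :=
  compact_differential_growth_to_fock_general m p hp hmp C f hf hbd' hconv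
end

section
/- Let m > 0 and let f be an entire function with sup_{z ∈ ℂ} |f'(z)| e^{-|z|^m} (1+|z|)^{1-m} =: M < ∞. Then f belongs to F_{(m,∞)}, i.e. sup_{z ∈ ℂ} |f(z)| e^{-|z|^m} < ∞; more precisely there is a constant C depending only on m such that sup_z |f(z)| e^{-|z|^m} ≤ C(|f(0)| + M). -/
/-!
The hypothesis bounds `|f'(w)|` by `M e^{|w|^m} (1 + |w|)^{m-1}`. If `G' ≥ e^{t^m} (1 + t)^{m-1}` on
`[0, ∞)`, integrating `f'` along the radius `[0, z]` gives `|f(z) - f(0)| ≤ M (G |z| - G 0)`, so it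
suffices to find such a `G` with `G r - G 0 ≤ A e^{r^m}`. For `m ≤ 1` take `G s = e^{(1+s)^m} / m`
and use `(1+r)^m ≤ 1 + r^m`; for `m ≥ 1` take `G s = 2^{m-1} (e^{s^m} / m + e s)` and use
`(1+s)^{m-1} ≤ (2s)^{m-1}` for `s ≥ 1`.
-/

open Real Set

structure RadialMajorant (m A : ℝ) (G G' : ℝ → ℝ) : Prop where
  hasDerivAt : ∀ t, 0 ≤ t → HasDerivAt G (G' t) t
  weight_le : ∀ t, 0 ≤ t → exp (t ^ m) * (1 + t) ^ (m - 1) ≤ G' t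
  sub_le : ∀ r, 0 ≤ r → G r - G 0 ≤ A * exp (r ^ m)

theorem RadialMajorant.nonneg {m A : ℝ} {G G' : ℝ → ℝ} (hm : 0 < m) (h : RadialMajorant m A G G') :
    0 ≤ A := by
  have h0 := h.sub_le 0 le_rfl
  rwa [sub_self, zero_rpow hm.ne', exp_zero, mul_one] at h0

theorem radialMajorant_of_le_one {m : ℝ} (hm : 0 < m) (hm1 : m ≤ 1) :
    RadialMajorant m (exp 1 / m) (fun s => exp ((1 + s) ^ m) / m)
      (fun s => exp ((1 + s) ^ m) * (1 + s) ^ (m - 1)) where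
  hasDerivAt t ht := by
    have hpow : HasDerivAt (fun s : ℝ => (1 + s) ^ m) (m * (1 + t) ^ (m - 1)) t := by
      simpa using ((hasDerivAt_id t).const_add 1).rpow_const (p := m)
        (Or.inl (by simp only [id]; linarith))
    refine (hpow.exp.div_const m).congr_deriv ?_
    field_simp
  weight_le t ht := by
    gcongr
    linarith
  sub_le r hr := by
    have hsub : (1 + r) ^ m ≤ 1 + r ^ m := by
      simpa using rpow_add_le_add_rpow zero_le_one hr hm.le hm1
    calc exp ((1 + r) ^ m) / m - exp ((1 + 0) ^ m) / m ≤ exp ((1 + r) ^ m) / m :=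
          sub_le_self _ (by positivity)
      _ ≤ exp (1 + r ^ m) / m := by gcongr
      _ = exp 1 / m * exp (r ^ m) := by rw [exp_add]; ring

theorem le_exp_rpow {m r : ℝ} (hm1 : 1 ≤ m) (hr : 0 ≤ r) : r ≤ exp (r ^ m) := by
  have hr_le : r ≤ 1 + r ^ m := by
    rcases le_total r 1 with hr1 | hr1
    · linarith [rpow_nonneg hr m]
    · have := rpow_le_rpow_of_exponent_le hr1 hm1
      rw [rpow_one] at this
      linarith [rpow_nonneg hr m]
  linarith [add_one_le_exp (r ^ m)]

theorem radialMajorant_of_one_le {m : ℝ} (hm1 : 1 ≤ m) :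
    RadialMajorant m (2 ^ (m - 1) * (1 / m + exp 1))
      (fun s => 2 ^ (m - 1) * (exp (s ^ m) / m + exp 1 * s))
      (fun s => 2 ^ (m - 1) * (s ^ (m - 1) * exp (s ^ m) + exp 1)) where
  hasDerivAt t _ := by
    have hm : 0 < m := by linarith
    have hexp := (hasDerivAt_rpow_const (x := t) (p := m) (Or.inr hm1)).exp
    refine (((hexp.div_const m).add ((hasDerivAt_id t).const_mul (exp 1))).const_mul
      ((2 : ℝ) ^ (m - 1))).congr_deriv ?_
    field_simp
  weight_le t ht := by
    have h2 : (0 : ℝ) ≤ 2 ^ (m - 1) := by positivity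
    have hpow : 0 ≤ t ^ (m - 1) * exp (t ^ m) := by positivity
    rcases le_total t 1 with ht1 | ht1
    · have hexp : exp (t ^ m) ≤ exp 1 := exp_le_exp.mpr (rpow_le_one ht ht1 (by linarith))
      have hbase : (1 + t) ^ (m - 1) ≤ 2 ^ (m - 1) := by gcongr; linarith
      calc exp (t ^ m) * (1 + t) ^ (m - 1) ≤ exp 1 * 2 ^ (m - 1) := by gcongr
        _ ≤ 2 ^ (m - 1) * (t ^ (m - 1) * exp (t ^ m) + exp 1) := by nlinarith
    · have hbase : (1 + t) ^ (m - 1) ≤ 2 ^ (m - 1) * t ^ (m - 1) := by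
        rw [← mul_rpow zero_le_two ht]
        gcongr; linarith
      calc exp (t ^ m) * (1 + t) ^ (m - 1) ≤ exp (t ^ m) * (2 ^ (m - 1) * t ^ (m - 1)) := by
            gcongr
        _ ≤ 2 ^ (m - 1) * (t ^ (m - 1) * exp (t ^ m) + exp 1) := by
            nlinarith [exp_pos 1]
  sub_le r hr := by
    have hm : 0 < m := by linarith
    have hr_le := le_exp_rpow hm1 hr
    simp only [zero_rpow hm.ne', exp_zero, mul_zero, add_zero]
    rw [← mul_sub, mul_assoc]
    gcongr
    have : exp 1 * r ≤ exp 1 * exp (r ^ m) := by gcongr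
    have : 0 < 1 / m := by positivity
    rw [add_mul, div_eq_mul_one_div (exp _) m]
    linarith

theorem exists_radialMajorant {m : ℝ} (hm : 0 < m) :
    ∃ A G G', RadialMajorant m A G G' := by
  rcases le_total m 1 with hm1 | hm1
  · exact ⟨_, _, _, radialMajorant_of_le_one hm hm1⟩
  · exact ⟨_, _, _, radialMajorant_of_one_le hm1⟩

theorem le_of_mul_exp_neg_mul_rpow_le {x M a b m : ℝ} (hb : 0 ≤ b)
    (h : x * exp (-a) * (1 + b) ^ (1 - m) ≤ M) : x ≤ M * (exp a * (1 + b) ^ (m - 1)) := by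
  have hweight : exp (-a) * (1 + b) ^ (1 - m) = (exp a * (1 + b) ^ (m - 1))⁻¹ := by
    rw [mul_inv, exp_neg, ← rpow_neg (by positivity), neg_sub]
  rwa [mul_assoc, hweight, ← div_eq_mul_inv, div_le_iff₀ (by positivity)] at h

theorem norm_sub_le_of_norm_deriv_le_radial {E : Type*} [NormedAddCommGroup E] [NormedSpace ℂ E]
    {f : ℂ → E} (hf : Differentiable ℂ f) {G G' : ℝ → ℝ}
    (hG : ∀ t, 0 ≤ t → HasDerivAt G (G' t) t) (hbound : ∀ w, ‖deriv f w‖ ≤ G' ‖w‖) (z : ℂ) :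
    ‖f z - f 0‖ ≤ G ‖z‖ - G 0 := by
  rcases eq_or_ne z 0 with rfl | hz
  · simp
  set u : ℂ := z / ‖z‖
  have hu : ‖u‖ = 1 := by simp [u, hz]
  have hφ : ∀ t : ℝ, HasDerivAt (fun t : ℝ => f (t * u) - f 0) (u • deriv f (t * u)) t := by
    intro t
    have hline : HasDerivAt (fun s : ℝ => (s : ℂ) * u) u t := by
      simpa using (hasDerivAt_id t).ofReal_comp.mul_const u
    exact ((hf _).hasDerivAt.scomp t hline).sub_const _
  have key := image_norm_le_of_norm_deriv_right_le_deriv_boundary' (a := 0) (b := ‖z‖)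
    (fun t _ => (hφ t).continuousAt.continuousWithinAt) (fun t _ => (hφ t).hasDerivWithinAt)
    (B := fun t => G t - G 0) (by simp)
    (fun t ht => ((hG t ht.1).sub_const _).continuousAt.continuousWithinAt)
    (fun t ht => ((hG t ht.1).sub_const _).hasDerivWithinAt)
    (fun t ht => by
      have hnorm : ‖(t : ℂ) * u‖ = t := by simp [hu, abs_of_nonneg ht.1]
      simpa only [norm_smul, hu, one_mul, hnorm] using hbound (t * u))
    ⟨norm_nonneg z, le_rfl⟩
  simpa [u, mul_div_cancel₀ _ (show ((‖z‖ : ℝ) : ℂ) ≠ 0 by simpa using hz)] using key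

theorem growth_space_of_deriv_bound (m : ℝ) (hm : 0 < m) :
    ∃ C > (0 : ℝ), ∀ f : ℂ → ℂ, Differentiable ℂ f → ∀ M : ℝ,
      (∀ z : ℂ, ‖deriv f z‖ * Real.exp (-(‖z‖ ^ m)) *
        (1 + ‖z‖) ^ (1 - m) ≤ M) →
      ∀ z : ℂ, ‖f z‖ * Real.exp (-(‖z‖ ^ m)) ≤
        C * (‖f 0‖ + M) := by
  obtain ⟨A, G, G', hG⟩ := exists_radialMajorant hm
  have hA := hG.nonneg hm
  refine ⟨1 + A, by positivity, fun f hf M hM z => ?_⟩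
  have hM0 : 0 ≤ M := le_trans (by positivity) (hM 0)
  have hderiv (w : ℂ) : ‖deriv f w‖ ≤ M * G' ‖w‖ :=
    (le_of_mul_exp_neg_mul_rpow_le (norm_nonneg w) (hM w)).trans
      (mul_le_mul_of_nonneg_left (hG.weight_le _ (norm_nonneg w)) hM0)
  have hsub := norm_sub_le_of_norm_deriv_le_radial hf
    (fun t ht => (hG.hasDerivAt t ht).const_mul M) hderiv z
  have hgrowth : ‖f z‖ ≤ ‖f 0‖ + M * A * exp (‖z‖ ^ m) := by
    have := mul_le_mul_of_nonneg_left (hG.sub_le _ (norm_nonneg z)) hM0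
    linarith [norm_sub_norm_le (f z) (f 0)]
  have hdecay : exp (-(‖z‖ ^ m)) ≤ 1 := exp_le_one_iff.mpr (by simp; positivity)
  calc ‖f z‖ * exp (-(‖z‖ ^ m)) ≤ (‖f 0‖ + M * A * exp (‖z‖ ^ m)) * exp (-(‖z‖ ^ m)) := by
        gcongr
    _ = ‖f 0‖ * exp (-(‖z‖ ^ m)) + M * A := by
        rw [add_mul, mul_assoc (M * A), ← exp_add, add_neg_cancel, exp_zero, mul_one]
    _ ≤ (1 + A) * (‖f 0‖ + M) := by
        nlinarith [norm_nonneg (f 0), mul_le_mul_of_nonneg_left hdecay (norm_nonneg (f 0))]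
end

section
/- Let m = 1. Then the differential operator D f = f' is bounded on F_{(1,∞)}: there exists a constant C such that for every entire function f with sup_z |f(z)| e^{-|z|} < ∞, one has sup_z |f'(z)| e^{-|z|} ≤ C sup_z |f(z)| e^{-|z|}. -/
open Metric Real

lemma mul_exp_neg_le_iff {a x M : ℝ} : a * exp (-x) ≤ M ↔ a ≤ M * exp x := by
  rw [exp_neg, ← div_eq_mul_inv, div_le_iff₀ (exp_pos x)]

lemma norm_deriv_le_of_norm_le_mul_exp {E : Type*} [NormedAddCommGroup E] [NormedSpace ℂ E]
    {f : ℂ → E} (hf : Differentiable ℂ f) {M : ℝ} (hM₀ : 0 ≤ M)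
    (hM : ∀ w, ‖f w‖ ≤ M * exp ‖w‖) (z : ℂ) {r : ℝ} (hr : 0 < r) :
    ‖deriv f z‖ ≤ M * exp (‖z‖ + r) / r := by
  refine Complex.norm_deriv_le_of_forall_mem_sphere_norm_le hr hf.diffContOnCl fun w hw => ?_
  have hw_norm : ‖w‖ ≤ ‖z‖ + r := norm_le_of_mem_closedBall (sphere_subset_closedBall hw)
  calc ‖f w‖ ≤ M * exp ‖w‖ := hM w
    _ ≤ M * exp (‖z‖ + r) := by gcongr

theorem differential_bounded_on_growth_m_one :
    ∃ C : ℝ, ∀ f : ℂ → ℂ, Differentiable ℂ f → ∀ M : ℝ,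
      (∀ z : ℂ, ‖f z‖ * Real.exp (-‖z‖) ≤ M) →
      ∀ z : ℂ, ‖deriv f z‖ * Real.exp (-‖z‖) ≤ C * M := by
  refine ⟨exp 1, fun f hf M hM z => ?_⟩
  have hM₀ : 0 ≤ M := (by positivity : 0 ≤ ‖f 0‖ * exp (-‖(0 : ℂ)‖)).trans (hM 0)
  have hcauchy := norm_deriv_le_of_norm_le_mul_exp hf hM₀ (fun w => mul_exp_neg_le_iff.mp (hM w))
    z one_pos
  rw [mul_exp_neg_le_iff]
  calc ‖deriv f z‖ ≤ M * exp (‖z‖ + 1) / 1 := hcauchy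
    _ = exp 1 * M * exp ‖z‖ := by rw [div_one, exp_add]; ring
end
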